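/- arXiv:2205.08038 — 3 statements merged into one kernel-verified Lean document; each statement's English description precedes it below -/
import Mathlib

section
/- Let A be a real symmetric invertible n×n matrix whose smallest eigenvalue is negative, and let ε > 0 be such that A + ε·I is positive definite. Then there exists μ ∈ (0,1) such that A + μ·ε·I is singular, and consequently the matrix I − (A + ε·I)⁻¹A has the real eigenvalue 1/(1−μ) > 1. -/
/-! If `v` is an eigenvector of `A` for a negative eigenvalue `λ`, positive definiteness of
`A + εI` gives `λ + ε > 0`, so `μ = -λ/ε` lies in `(0, 1)` and `A + μεI` kills `v`. Since
`I - (A + εI)⁻¹A = ε(A + εI)⁻¹`, the same `v` is an eigenvector of the Newton Jacobian, for the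
eigenvalue `ε/(λ + ε) = 1/(1 - μ) > 1`. -/

open Matrix

noncomputable section

/-- `ρ` is a (complex) eigenvalue of the real matrix `M`, i.e. a root of its characteristic
polynomial: `det(ρ·I − M) = 0` over `ℂ`. -/
def IsCxEigenvalue {n : ℕ} (M : Matrix (Fin n) (Fin n) ℝ) (ρ : ℂ) : Prop :=
  (ρ • (1 : Matrix (Fin n) (Fin n) ℂ) - M.map (Complex.ofReal)).det = 0

theorem isCxEigenvalue_ofReal_iff {n : ℕ} (M : Matrix (Fin n) (Fin n) ℝ) (r : ℝ) :
    IsCxEigenvalue M r ↔ (r • (1 : Matrix (Fin n) (Fin n) ℝ) - M).det = 0 := by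
  rw [IsCxEigenvalue, smul_one_eq_diagonal, ← scalar_apply, ← eval_charpoly]
  change (M.map Complex.ofRealHom).charpoly.eval (Complex.ofRealHom r) = 0 ↔ _
  rw [charpoly_map, Polynomial.eval_map_apply, map_eq_zero, eval_charpoly, scalar_apply,
    smul_one_eq_diagonal]

namespace Matrix

variable {ι K : Type*} [Fintype ι]

theorem PosDef.pos_of_mulVec_eq_smul {M : Matrix ι ι ℝ} (hM : M.PosDef) {v : ι → ℝ} (hv : v ≠ 0)
    {r : ℝ} (h : M *ᵥ v = r • v) : 0 < r := by
  have hpos := hM.dotProduct_mulVec_pos hv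
  rw [h, dotProduct_smul, smul_eq_mul] at hpos
  exact pos_of_mul_pos_left hpos (dotProduct_star_self_pos_iff.mpr hv).le

variable [DecidableEq ι] [Field K] {M : Matrix ι ι K} {v : ι → K} {r : K}

theorem det_smul_one_sub_eq_zero_of_mulVec_eq_smul (hv : v ≠ 0) (h : M *ᵥ v = r • v) :
    (r • 1 - M).det = 0 :=
  exists_mulVec_eq_zero_iff.mp ⟨v, hv, by rw [sub_mulVec, smul_mulVec, one_mulVec, h, sub_self]⟩

theorem add_smul_one_mulVec_of_mulVec_eq_smul (h : M *ᵥ v = r • v) (c : K) :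
    (M + c • 1) *ᵥ v = (r + c) • v := by
  rw [add_mulVec, smul_mulVec, one_mulVec, h, add_smul]

theorem inv_mulVec_of_mulVec_eq_smul (hM : IsUnit M.det) (hr : r ≠ 0) (h : M *ᵥ v = r • v) :
    M⁻¹ *ᵥ v = r⁻¹ • v := by
  rw [eq_inv_smul_iff₀ hr, ← mulVec_smul, ← h, mulVec_mulVec, nonsing_inv_mul _ hM, one_mulVec]

theorem one_sub_inv_mul_eq_smul_inv (A : Matrix ι ι K) (ε : K) (hB : IsUnit (A + ε • 1).det) :
    1 - (A + ε • 1)⁻¹ * A = ε • (A + ε • 1)⁻¹ := by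
  nth_rw 2 [show A = (A + ε • 1) - ε • 1 by abel]
  rw [mul_sub, nonsing_inv_mul _ hB, Matrix.mul_smul, mul_one]
  abel

end Matrix
theorem newton_jacobian_unstable_eigenvalue_general {n : ℕ} (A : Matrix (Fin n) (Fin n) ℝ)
    (hA : A.IsHermitian)
    (hneg : ∃ i, hA.eigenvalues i < 0)
    (ε : ℝ)
    (hpd : (A + ε • (1 : Matrix (Fin n) (Fin n) ℝ)).PosDef) :
    ∃ μ ∈ Set.Ioo (0 : ℝ) 1,
      (A + (μ * ε) • (1 : Matrix (Fin n) (Fin n) ℝ)).det = 0 ∧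
      IsCxEigenvalue ((1 : Matrix (Fin n) (Fin n) ℝ) -
          (A + ε • (1 : Matrix (Fin n) (Fin n) ℝ))⁻¹ * A) ((1 / (1 - μ) : ℝ) : ℂ) ∧
      1 < 1 / (1 - μ) := by
  obtain ⟨i, hlam⟩ := hneg
  set lam := hA.eigenvalues i
  set v : Fin n → ℝ := ⇑(hA.eigenvectorBasis i)
  have hv : v ≠ 0 := by simpa [v] using hA.eigenvectorBasis.orthonormal.ne_zero i
  have hAv : A *ᵥ v = lam • v := hA.mulVec_eigenvectorBasis i
  have hBv := add_smul_one_mulVec_of_mulVec_eq_smul hAv ε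
  have hpos : 0 < lam + ε := hpd.pos_of_mulVec_eq_smul hv hBv
  have hε : 0 < ε := by linarith
  have hρ : 1 / (1 - -lam / ε) = ε / (lam + ε) := by
    rw [one_sub_div hε.ne', sub_neg_eq_add, add_comm, one_div_div]
  refine ⟨-lam / ε, ⟨div_pos (neg_pos.2 hlam) hε, (div_lt_one hε).2 (by linarith)⟩, ?_, ?_, ?_⟩
  · rw [div_mul_cancel₀ _ hε.ne', ← exists_mulVec_eq_zero_iff]
    exact ⟨v, hv, by rw [add_smul_one_mulVec_of_mulVec_eq_smul hAv, add_neg_cancel, zero_smul]⟩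
  · rw [hρ, isCxEigenvalue_ofReal_iff]
    refine det_smul_one_sub_eq_zero_of_mulVec_eq_smul hv ?_
    rw [one_sub_inv_mul_eq_smul_inv A ε hpd.det_pos.ne'.isUnit, smul_mulVec,
      inv_mulVec_of_mulVec_eq_smul hpd.det_pos.ne'.isUnit hpos.ne' hBv, smul_smul, div_eq_mul_inv]
  · rw [hρ, one_lt_div hpos]
    linarith

/-- If `A` is symmetric, invertible, with a negative eigenvalue, and `ε > 0` makes `A + ε·I`
positive definite, then `A + μ·ε·I` is singular for some `μ ∈ (0,1)`, and consequently
`I − (A + ε·I)⁻¹A` has the real eigenvalue `1/(1−μ) > 1`. -/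
theorem newton_jacobian_unstable_eigenvalue {n : ℕ} (A : Matrix (Fin n) (Fin n) ℝ)
    (hA : A.IsHermitian) (hinv : IsUnit A.det)
    (hneg : ∃ i, hA.eigenvalues i < 0)
    (ε : ℝ) (hε : 0 < ε)
    (hpd : (A + ε • (1 : Matrix (Fin n) (Fin n) ℝ)).PosDef) :
    ∃ μ ∈ Set.Ioo (0 : ℝ) 1,
      (A + (μ * ε) • (1 : Matrix (Fin n) (Fin n) ℝ)).det = 0 ∧
      IsCxEigenvalue ((1 : Matrix (Fin n) (Fin n) ℝ) -
          (A + ε • (1 : Matrix (Fin n) (Fin n) ℝ))⁻¹ * A) ((1 / (1 - μ) : ℝ) : ℂ) ∧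
      1 < 1 / (1 - μ) :=
  newton_jacobian_unstable_eigenvalue_general A hA hneg ε hpd
end
end

section
/- Consider the constrained minimization min f(x) over {x ∈ ℝⁿ : G(x) = 0, F(x) ≤ 0}, with f : ℝⁿ → ℝ, G : ℝⁿ → ℝˡ, F : ℝⁿ → ℝᵐ all twice continuously differentiable. Let z = (x, s, ν, λ) with slack s ∈ ℝᵐ satisfy g(z,0) = 0 with λ ≥ 0 and s ≥ 0. If the LICQ and strict complementarity hold at z, and the inertia of H_zz f(z) equals (n+m, l+m, 0), then x is a local minimum of the constrained problem, i.e., there is δ > 0 such that f(x) ≤ f(x̃) for every x̃ with G(x̃)=0, F(x̃) ≤ 0 and ‖x̃ − x‖ < δ. -/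
open Filter Topology Matrix

noncomputable section

/-- The `i`-th partial derivative of `f` at `x`. -/
def pd {n : ℕ} (f : EuclideanSpace ℝ (Fin n) → ℝ) (x : EuclideanSpace ℝ (Fin n)) (i : Fin n) : ℝ :=
  fderiv ℝ f x (EuclideanSpace.single i 1)

/-- The Hessian matrix of `f` at `x`. -/
def hessian {n : ℕ} (f : EuclideanSpace ℝ (Fin n) → ℝ) (x : EuclideanSpace ℝ (Fin n)) :
    Matrix (Fin n) (Fin n) ℝ :=
  Matrix.of fun i j => pd (fun y => pd f y j) x i

/-- The real symmetric matrix `A` has inertia `t = (n₊, n₋, n₀)`: the numbers of positive,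
negative, and zero eigenvalues counted with multiplicity. -/
def HasInertia {ι : Type*} [Fintype ι] [DecidableEq ι] (A : Matrix ι ι ℝ)
    (t : ℕ × ℕ × ℕ) : Prop :=
  ∃ hA : A.IsHermitian,
    Nat.card {i // 0 < hA.eigenvalues i} = t.1 ∧
    Nat.card {i // hA.eigenvalues i < 0} = t.2.1 ∧
    Nat.card {i // hA.eigenvalues i = 0} = t.2.2

variable {n l m : ℕ}

/-- The Lagrangian `L(z) = f(x) + ν'G(x) + λ'(F(x)+s)`, as a function of `x`. -/
def LagrangianMin (f : EuclideanSpace ℝ (Fin n) → ℝ) (G : EuclideanSpace ℝ (Fin n) → Fin l → ℝ)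
    (F : EuclideanSpace ℝ (Fin n) → Fin m → ℝ) (s : Fin m → ℝ) (ν : Fin l → ℝ)
    (lam : Fin m → ℝ) : EuclideanSpace ℝ (Fin n) → ℝ :=
  fun x => f x + (∑ j, ν j * G x j) + ∑ i, lam i * (F x i + s i)

/-- The matrix `H_zz f(z)` of the second-order conditions for constrained minimization. -/
def HzzMin (f : EuclideanSpace ℝ (Fin n) → ℝ) (G : EuclideanSpace ℝ (Fin n) → Fin l → ℝ)
    (F : EuclideanSpace ℝ (Fin n) → Fin m → ℝ) (x : EuclideanSpace ℝ (Fin n)) (s : Fin m → ℝ)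
    (ν : Fin l → ℝ) (lam : Fin m → ℝ) :
    Matrix ((Fin n ⊕ Fin m) ⊕ (Fin l ⊕ Fin m)) ((Fin n ⊕ Fin m) ⊕ (Fin l ⊕ Fin m)) ℝ :=
  Matrix.fromBlocks
    (Matrix.fromBlocks (hessian (LagrangianMin f G F s ν lam) x) 0 0 (Matrix.diagonal lam))
    (Matrix.fromBlocks (Matrix.of fun i j => pd (fun x' => G x' j) x i)
      (Matrix.of fun i j => pd (fun x' => F x' j) x i) 0
      (Matrix.diagonal fun i => Real.sqrt (s i)))
    (Matrix.fromBlocks (Matrix.of fun i j => pd (fun x' => G x' j) x i)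
      (Matrix.of fun i j => pd (fun x' => F x' j) x i) 0
      (Matrix.diagonal fun i => Real.sqrt (s i)))ᵀ
    0


/-! If `x` were not a local minimizer, feasible points of smaller objective value would
accumulate at `x`, and their normalized directions give a nonzero `d` in the tangent cone.
First-order conditions along `d`, the KKT equations and strict complementarity make `d` critical:
`∇G d = 0` and `∇F⁽ⁱ⁾ d = 0` for active `i`. Since the Lagrangian is stationary at `x` and lies
below `f` on the feasible set, a second-order mean value argument gives `∇ₓₓL(x) d·d ≤ 0`. But the
inertia of `H_zz` makes `∇ₓₓL(x)` positive definite on critical directions: otherwise `H_zz` would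
be nonpositive on an `(l + m + 1)`-dimensional subspace, leaving room for at most `n + m - 1`
positive eigenvalues. -/

open Set

theorem accPt_of_not_isLocalMinOn {X β : Type*} [TopologicalSpace X] [LinearOrder β]
    {f : X → β} {s : Set X} {x : X} (h : ¬IsLocalMinOn f s x) :
    AccPt x (𝓟 {y ∈ s | f y < f x}) := by
  rw [IsLocalMinOn, IsMinFilter, not_eventually, frequently_nhdsWithin_iff] at h
  refine accPt_iff_frequently.2 (h.mono fun y hy => ?_)
  have hlt : f y < f x := not_le.1 hy.1
  exact ⟨fun h => hlt.ne (h ▸ rfl), hy.2, hlt⟩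

section SecondOrder

variable {E : Type*} [NormedAddCommGroup E] [NormedSpace ℝ E]

theorem exists_ne_zero_mem_posTangentConeAt [ProperSpace E] {s : Set E} {x : E}
    (hx : AccPt x (𝓟 s)) : ∃ y ∈ posTangentConeAt s x, y ≠ 0 := by
  obtain ⟨v, hv, hvx⟩ : ∃ v : ℕ → E, (∀ k, v k ∈ s \ {x}) ∧ Tendsto v atTop (𝓝 x) :=
    mem_closure_iff_seq_limit.1 <| mem_closure_iff_clusterPt.2 <|
      accPt_principal_iff_clusterPt.1 hx
  have hd : Tendsto (fun k => v k - x) atTop (𝓝 0) := by simpa using hvx.sub_const x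
  have hnorm : ∀ k, ‖v k - x‖ ≠ 0 := fun k => by simpa [sub_eq_zero] using (hv k).2
  set c : ℕ → NNReal := fun k => ‖v k - x‖₊⁻¹
  have hsphere : ∀ k, c k • (v k - x) ∈ Metric.sphere (0 : E) 1 := fun k => by
    simp [c, NNReal.smul_def, norm_smul, hnorm k]
  obtain ⟨y, hy, φ, hφ, hlim⟩ := (isCompact_sphere (0 : E) 1).tendsto_subseq hsphere
  refine ⟨y, mem_tangentConeAt_of_seq atTop (c ∘ φ) (fun k => v (φ k) - x)
    (hd.comp hφ.tendsto_atTop) (.of_forall fun k => by simpa using (hv (φ k)).1) hlim, ?_⟩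
  exact ne_zero_of_mem_unit_sphere ⟨y, hy⟩

theorem exists_fderiv_fderiv_apply_nonpos_of_le {g : E → ℝ} (hg : ContDiff ℝ 2 g) {x h : E}
    (hx : fderiv ℝ g x = 0) (hle : g (x + h) ≤ g x) :
    ∃ θ ∈ Ioo (0 : ℝ) 1, fderiv ℝ (fderiv ℝ g) (x + θ • h) h h ≤ 0 := by
  have hline : ∀ t : ℝ, HasDerivAt (fun t : ℝ => x + t • h) h t := fun t => by
    simpa using ((hasDerivAt_id t).smul_const h).const_add x
  set φ : ℝ → ℝ := fun t => g (x + t • h)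
  set ψ : ℝ → ℝ := fun t => fderiv ℝ g (x + t • h) h
  have hφ : ∀ t, HasDerivAt φ (ψ t) t := fun t =>
    ((hg.differentiable two_ne_zero _).hasFDerivAt).comp_hasDerivAt t (hline t)
  have hψ : ∀ t, HasDerivAt ψ (fderiv ℝ (fderiv ℝ g) (x + t • h) h h) t := fun t =>
    (((ContinuousLinearMap.apply ℝ ℝ h).hasFDerivAt.comp _
      ((hg.fderiv_right le_rfl).differentiable one_ne_zero _).hasFDerivAt)).comp_hasDerivAt
      t (hline t)
  obtain ⟨c, hc, hψc⟩ := exists_hasDerivAt_eq_slope φ ψ one_pos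
    (fun t _ => (hφ t).continuousAt.continuousWithinAt) (fun t _ => hφ t)
  obtain ⟨θ, hθ, hθc⟩ := exists_hasDerivAt_eq_slope ψ _ hc.1
    (fun t _ => (hψ t).continuousAt.continuousWithinAt) (fun t _ => hψ t)
  refine ⟨θ, ⟨hθ.1, hθ.2.trans hc.2⟩, ?_⟩
  have hψ0 : ψ 0 = 0 := by simp [ψ, hx]
  have hψc_nonpos : ψ c ≤ 0 := by
    rw [hψc]; exact div_nonpos_of_nonpos_of_nonneg (by simpa [φ] using hle) (by norm_num)
  rw [hθc, hψ0, sub_zero, sub_zero]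
  exact div_nonpos_of_nonpos_of_nonneg hψc_nonpos hc.1.le

theorem IsLocalMaxOn.fderiv_fderiv_apply_nonpos {g : E → ℝ} {s : Set E} {x y : E}
    (hmax : IsLocalMaxOn g s x) (hg : ContDiff ℝ 2 g) (hx : fderiv ℝ g x = 0)
    (hy : y ∈ posTangentConeAt s x) : fderiv ℝ (fderiv ℝ g) x y y ≤ 0 := by
  obtain ⟨α, l, hl, c, d, hd₀, hds, hcd⟩ := exists_fun_of_mem_tangentConeAt hy
  have hle : ∀ᶠ n in l, g (x + d n) ≤ g x := by
    have hd : Tendsto (fun n => x + d n) l (𝓝[s] x) :=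
      tendsto_nhdsWithin_iff.2 ⟨by simpa using tendsto_const_nhds.add hd₀, hds⟩
    exact hd.eventually hmax
  have hθ : ∀ n, ∃ θ ∈ Ioo (0 : ℝ) 1,
      g (x + d n) ≤ g x → fderiv ℝ (fderiv ℝ g) (x + θ • d n) (d n) (d n) ≤ 0 := fun n => by
    by_cases hn : g (x + d n) ≤ g x
    · obtain ⟨θ, hθ, hneg⟩ := exists_fderiv_fderiv_apply_nonpos_of_le hg hx hn
      exact ⟨θ, hθ, fun _ => hneg⟩
    · exact ⟨1 / 2, by norm_num, fun h => absurd h hn⟩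
  choose θ hθ hθneg using hθ
  have hξ : Tendsto (fun n => x + θ n • d n) l (𝓝 x) := by
    have hθd : Tendsto (fun n => θ n • d n) l (𝓝 0) :=
      squeeze_zero_norm (a := fun n => ‖d n‖) (fun n => by
        rw [norm_smul, Real.norm_of_nonneg (hθ n).1.le]
        exact mul_le_of_le_one_left (norm_nonneg _) (hθ n).2.le) (by simpa using hd₀.norm)
    simpa using tendsto_const_nhds.add hθd
  have hcont : Continuous fun p : E × E => fderiv ℝ (fderiv ℝ g) p.1 p.2 p.2 := by
    have := (hg.fderiv_right le_rfl).continuous_fderiv one_ne_zero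
    fun_prop
  have hlim := (hcont.tendsto (x, y)).comp (hξ.prodMk_nhds hcd)
  refine le_of_tendsto hlim (hle.mono fun n hn => ?_)
  simp only [Function.comp_apply, NNReal.smul_def, map_smul, _root_.smul_apply, smul_eq_mul]
  exact mul_nonpos_of_nonneg_of_nonpos (c n).coe_nonneg
    (mul_nonpos_of_nonneg_of_nonpos (c n).coe_nonneg (hθneg n hn))

end SecondOrder

namespace Matrix.IsHermitian

variable {ι : Type*} [Fintype ι] [DecidableEq ι] {A : Matrix ι ι ℝ}

theorem dotProduct_mulVec_eq_sum_eigenvalues (hA : A.IsHermitian) (v : ι → ℝ) :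
    v ⬝ᵥ A *ᵥ v =
      ∑ i, hA.eigenvalues i * (star (hA.eigenvectorUnitary : Matrix ι ι ℝ) *ᵥ v) i ^ 2 := by
  conv_lhs => rw [hA.spectral_theorem, Unitary.conjStarAlgAut_apply]
  rw [← mulVec_mulVec, ← mulVec_mulVec, dotProduct_mulVec, ← mulVec_transpose,
    ← conjTranspose_eq_transpose_of_trivial, ← star_eq_conjTranspose]
  simp [dotProduct, mulVec_diagonal, sq, mul_left_comm]

theorem card_pos_eigenvalues_add_finrank_le (hA : A.IsHermitian) {V : Type*} [AddCommGroup V]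
    [Module ℝ V] [FiniteDimensional ℝ V] (T : V →ₗ[ℝ] ι → ℝ) (hT : Function.Injective T)
    (hq : ∀ v, T v ⬝ᵥ A *ᵥ T v ≤ 0) :
    Nat.card {i // 0 < hA.eigenvalues i} + Module.finrank ℝ V ≤ Fintype.card ι := by
  set U : Matrix ι ι ℝ := (hA.eigenvectorUnitary : Matrix ι ι ℝ)
  -- on `ker Φ` the form is a sum of nonnegative terms `λᵢ yᵢ²`, yet it is `≤ 0` by `hq`
  let Φ : V →ₗ[ℝ] {i // ¬0 < hA.eigenvalues i} → ℝ :=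
    LinearMap.funLeft ℝ ℝ Subtype.val ∘ₗ (star U).mulVecLin ∘ₗ T
  have hΦ : Function.Injective Φ := by
    refine (injective_iff_map_eq_zero Φ).2 fun v hv => hT ?_
    set y := star U *ᵥ T v
    have hy : ∀ i, ¬0 < hA.eigenvalues i → y i = 0 := fun i hi => congrFun hv ⟨i, hi⟩
    have hterm : ∀ i ∈ Finset.univ, 0 ≤ hA.eigenvalues i * y i ^ 2 := fun i _ => by
      by_cases hi : 0 < hA.eigenvalues i
      · positivity
      · simp [hy i hi]
    have hsum := (Finset.sum_eq_zero_iff_of_nonneg hterm).1 <| le_antisymm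
      (hA.dotProduct_mulVec_eq_sum_eigenvalues (T v) ▸ hq v) (Finset.sum_nonneg hterm)
    have hy0 : y = 0 := funext fun i => by
      by_cases hi : 0 < hA.eigenvalues i
      · simpa [hi.ne'] using hsum i (Finset.mem_univ i)
      · exact hy i hi
    calc T v = U *ᵥ y := by
          rw [mulVec_mulVec, Unitary.mul_star_self_of_mem hA.eigenvectorUnitary.2, one_mulVec]
      _ = T 0 := by rw [hy0, mulVec_zero, map_zero]
  have hrank := LinearMap.finrank_le_finrank_of_injective hΦ
  rw [Module.finrank_fintype_fun_eq_card, Fintype.card_subtype_compl] at hrank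
  have := Fintype.card_subtype_le (fun i => 0 < hA.eigenvalues i)
  rw [Nat.card_eq_fintype_card]
  omega

end Matrix.IsHermitian

section SaddlePoint

variable {α β : Type*} [Fintype α] [Fintype β]

theorem sumElim_dotProduct_fromBlocks_mulVec_sumElim (K : Matrix α α ℝ) (C : Matrix α β ℝ)
    (a : α → ℝ) (b : β → ℝ) :
    Sum.elim a b ⬝ᵥ fromBlocks K C Cᵀ 0 *ᵥ Sum.elim a b = a ⬝ᵥ K *ᵥ a + 2 * (Cᵀ *ᵥ a ⬝ᵥ b) := by
  rw [fromBlocks_mulVec, sumElim_dotProduct_sumElim]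
  simp only [Sum.elim_comp_inl, Sum.elim_comp_inr, zero_mulVec, add_zero, dotProduct_add,
    dotProduct_mulVec a C, ← mulVec_transpose, dotProduct_comm b]
  ring

/-- If `u ≠ 0` with `Cᵀ u = 0` had `uᵀ K u ≤ 0`, the form would be nonpositive on the span of
`(u, 0)` and `0 × ℝ^β`. -/
theorem dotProduct_mulVec_pos_of_card_le_card_pos_eigenvalues [DecidableEq α] [DecidableEq β]
    {K : Matrix α α ℝ} {C : Matrix α β ℝ} (hM : (fromBlocks K C Cᵀ 0).IsHermitian)
    (hpos : Fintype.card α ≤ Nat.card {i // 0 < hM.eigenvalues i})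
    {u : α → ℝ} (hu : Cᵀ *ᵥ u = 0) (hu0 : u ≠ 0) : 0 < u ⬝ᵥ K *ᵥ u := by
  by_contra! hle
  let T : ℝ × (β → ℝ) →ₗ[ℝ] α ⊕ β → ℝ := (LinearEquiv.sumArrowLequivProdArrow α β ℝ ℝ).symm ∘ₗ
    (LinearMap.toSpanSingleton ℝ _ u).prodMap LinearMap.id
  have hT : Function.Injective T :=
    (LinearEquiv.sumArrowLequivProdArrow α β ℝ ℝ).symm.injective.comp
      ((smul_left_injective ℝ hu0).prodMap Function.injective_id)
  have hq : ∀ p, T p ⬝ᵥ fromBlocks K C Cᵀ 0 *ᵥ T p ≤ 0 := fun ⟨t, b⟩ => by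
    change Sum.elim (t • u) b ⬝ᵥ _ *ᵥ Sum.elim (t • u) b ≤ 0
    simp only [sumElim_dotProduct_fromBlocks_mulVec_sumElim, mulVec_smul, hu, smul_zero,
      zero_dotProduct, mul_zero, add_zero, dotProduct_smul, smul_dotProduct, smul_eq_mul,
      ← mul_assoc]
    exact mul_nonpos_of_nonneg_of_nonpos (mul_self_nonneg t) hle
  have := hM.card_pos_eigenvalues_add_finrank_le T hT hq
  simp only [Module.finrank_prod, Module.finrank_self, Module.finrank_fintype_fun_eq_card,
    Fintype.card_sum] at this
  omega

end SaddlePoint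

section Coordinates

theorem EuclideanSpace.map_eq_sum_single {M : Type*} [AddCommMonoid M] [Module ℝ M]
    [TopologicalSpace M] (φ : EuclideanSpace ℝ (Fin n) →L[ℝ] M) (v : EuclideanSpace ℝ (Fin n)) :
    φ v = ∑ i, v i • φ (EuclideanSpace.single i 1) := by
  conv_lhs => rw [← (EuclideanSpace.basisFun (Fin n) ℝ).sum_repr v]
  simp

theorem fderiv_apply_eq_sum_pd (g : EuclideanSpace ℝ (Fin n) → ℝ)
    (x v : EuclideanSpace ℝ (Fin n)) : fderiv ℝ g x v = ∑ i, v i * pd g x i :=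
  EuclideanSpace.map_eq_sum_single (fderiv ℝ g x) v

theorem transpose_of_pd_mulVec {ι : Type*} (Φ : EuclideanSpace ℝ (Fin n) → ι → ℝ)
    (x v : EuclideanSpace ℝ (Fin n)) :
    (Matrix.of fun i j => pd (fun y => Φ y j) x i)ᵀ *ᵥ ⇑v =
      fun j => fderiv ℝ (fun y => Φ y j) x v := by
  ext j
  simp [mulVec, dotProduct, fderiv_apply_eq_sum_pd, mul_comm]

theorem hessian_apply {g : EuclideanSpace ℝ (Fin n) → ℝ} {x : EuclideanSpace ℝ (Fin n)}
    (hg : DifferentiableAt ℝ (fderiv ℝ g) x) (i j : Fin n) :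
    hessian g x i j =
      fderiv ℝ (fderiv ℝ g) x (EuclideanSpace.single i 1) (EuclideanSpace.single j 1) := by
  simp [hessian, pd, fderiv_clm_apply hg (differentiableAt_const _)]

theorem dotProduct_hessian_mulVec {g : EuclideanSpace ℝ (Fin n) → ℝ}
    {x : EuclideanSpace ℝ (Fin n)} (hg : DifferentiableAt ℝ (fderiv ℝ g) x)
    (v : EuclideanSpace ℝ (Fin n)) :
    ⇑v ⬝ᵥ hessian g x *ᵥ ⇑v = fderiv ℝ (fderiv ℝ g) x v v := by
  conv_rhs => rw [EuclideanSpace.map_eq_sum_single (fderiv ℝ (fderiv ℝ g) x) v]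
  simp only [_root_.sum_apply, _root_.smul_apply, smul_eq_mul]
  conv_rhs => enter [2, i]; rw [EuclideanSpace.map_eq_sum_single
    (fderiv ℝ (fderiv ℝ g) x (EuclideanSpace.single i 1)) v]
  simp [dotProduct, mulVec, hessian_apply hg, Finset.mul_sum, mul_comm]

end Coordinates

def feasibleSet (G : EuclideanSpace ℝ (Fin n) → Fin l → ℝ)
    (F : EuclideanSpace ℝ (Fin n) → Fin m → ℝ) : Set (EuclideanSpace ℝ (Fin n)) :=
  {y | (∀ j, G y j = 0) ∧ ∀ i, F y i ≤ 0}

section Lagrangian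

variable {f : EuclideanSpace ℝ (Fin n) → ℝ} {G : EuclideanSpace ℝ (Fin n) → Fin l → ℝ}
  {F : EuclideanSpace ℝ (Fin n) → Fin m → ℝ} {x : EuclideanSpace ℝ (Fin n)} {s : Fin m → ℝ}
  {ν : Fin l → ℝ} {lam : Fin m → ℝ}

theorem contDiff_lagrangianMin {k : WithTop ℕ∞} (hf : ContDiff ℝ k f) (hG : ContDiff ℝ k G)
    (hF : ContDiff ℝ k F) : ContDiff ℝ k (LagrangianMin f G F s ν lam) :=
  (hf.add (ContDiff.sum fun j _ => contDiff_const.mul (contDiff_pi.1 hG j))).add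
    (ContDiff.sum fun i _ => contDiff_const.mul ((contDiff_pi.1 hF i).add contDiff_const))

theorem hasFDerivAt_lagrangianMin (hf : DifferentiableAt ℝ f x) (hG : DifferentiableAt ℝ G x)
    (hF : DifferentiableAt ℝ F x) :
    HasFDerivAt (LagrangianMin f G F s ν lam)
      (fderiv ℝ f x + ∑ j, ν j • fderiv ℝ (fun y => G y j) x +
        ∑ i, lam i • fderiv ℝ (fun y => F y i) x) x :=
  (hf.hasFDerivAt.add (HasFDerivAt.fun_sum fun j _ =>
      ((differentiableAt_pi.1 hG j).hasFDerivAt).const_mul (ν j))).add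
    (HasFDerivAt.fun_sum fun i _ =>
      (((differentiableAt_pi.1 hF i).hasFDerivAt).add_const (s i)).const_mul (lam i))

theorem lagrangianMin_le_of_mem_feasibleSet (hcompl : ∀ i, lam i * s i = 0)
    (hlam : ∀ i, 0 ≤ lam i) {y : EuclideanSpace ℝ (Fin n)} (hy : y ∈ feasibleSet G F) :
    LagrangianMin f G F s ν lam y ≤ f y := by
  have hνG : ∑ j, ν j * G y j = 0 := Finset.sum_eq_zero fun j _ => by rw [hy.1 j, mul_zero]
  have hlamF : ∑ i, lam i * (F y i + s i) ≤ 0 := Finset.sum_nonpos fun i _ => by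
    rw [mul_add, hcompl i, add_zero]
    exact mul_nonpos_of_nonneg_of_nonpos (hlam i) (hy.2 i)
  simp only [LagrangianMin, hνG]
  linarith

theorem lagrangianMin_apply_eq (hGeq : ∀ j, G x j = 0) (hFeq : ∀ i, F x i + s i = 0) :
    LagrangianMin f G F s ν lam x = f x := by
  simp [LagrangianMin, hGeq, hFeq]

theorem fderiv_apply_eq_zero_of_active (hf : DifferentiableAt ℝ f x)
    (hG : DifferentiableAt ℝ G x) (hF : DifferentiableAt ℝ F x)
    (hL : fderiv ℝ (LagrangianMin f G F s ν lam) x = 0) (hcompl : ∀ i, lam i * s i = 0)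
    (hFeq : ∀ i, F x i + s i = 0) (hlam : ∀ i, 0 ≤ lam i) (hstrict : ∀ i, F x i = 0 → 0 < lam i)
    {d : EuclideanSpace ℝ (Fin n)} (hfd : fderiv ℝ f x d ≤ 0)
    (hGd : ∀ j, fderiv ℝ (fun y => G y j) x d = 0)
    (hFd : ∀ i, F x i = 0 → fderiv ℝ (fun y => F y i) x d ≤ 0) {i : Fin m} (hi : F x i = 0) :
    fderiv ℝ (fun y => F y i) x d = 0 := by
  have hterm : ∀ k ∈ Finset.univ, lam k * fderiv ℝ (fun y => F y k) x d ≤ 0 := fun k _ => by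
    by_cases hk : F x k = 0
    · exact mul_nonpos_of_nonneg_of_nonpos (hlam k) (hFd k hk)
    · have hsk : s k ≠ 0 := fun h => hk (by linarith [hFeq k])
      simp [(mul_eq_zero.1 (hcompl k)).resolve_right hsk]
  have hsum : fderiv ℝ f x d + ∑ k, lam k * fderiv ℝ (fun y => F y k) x d = 0 := by
    have hDL := (hasFDerivAt_lagrangianMin (s := s) (ν := ν) (lam := lam) hf hG hF).fderiv
    rw [hL] at hDL
    simpa [hGd] using congrArg (· d) hDL.symm
  have hzero := (Finset.sum_eq_zero_iff_of_nonpos hterm).1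
    (le_antisymm (Finset.sum_nonpos hterm) (by linarith)) i (Finset.mem_univ i)
  exact (mul_eq_zero.1 hzero).resolve_left (hstrict i hi).ne'

/-- The inertia of `H_zz` makes `∇ₓₓL` positive definite on the critical directions: apply the
saddle-point criterion to `(v, w)` with `w⁽ⁱ⁾ = -∇F⁽ⁱ⁾ v / √s⁽ⁱ⁾`, a vector in the kernel of the
constraint block (`w⁽ⁱ⁾ = 0` when `s⁽ⁱ⁾ = 0`, by the convention `a / 0 = 0`). -/
theorem dotProduct_hessian_lagrangianMin_mulVec_pos (hcompl : ∀ i, lam i * s i = 0)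
    (hFeq : ∀ i, F x i + s i = 0) (hs : ∀ i, 0 ≤ s i)
    (hinertia : HasInertia (HzzMin f G F x s ν lam) (n + m, l + m, 0))
    {v : EuclideanSpace ℝ (Fin n)} (hv : v ≠ 0) (hGv : ∀ j, fderiv ℝ (fun y => G y j) x v = 0)
    (hFv : ∀ i, F x i = 0 → fderiv ℝ (fun y => F y i) x v = 0) :
    0 < ⇑v ⬝ᵥ hessian (LagrangianMin f G F s ν lam) x *ᵥ ⇑v := by
  obtain ⟨hM, hpos, -, -⟩ := hinertia
  set w : Fin m → ℝ := fun i => -fderiv ℝ (fun y => F y i) x v / √(s i)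
  have hsw : ∀ i, √(s i) * w i = -fderiv ℝ (fun y => F y i) x v := fun i => by
    rcases (hs i).eq_or_lt with hsi | hsi
    · simp [w, ← hsi, hFv i (by linarith [hFeq i])]
    · exact mul_div_cancel₀ _ (Real.sqrt_pos.2 hsi).ne'
  have hlamw : ∀ i, lam i * w i = 0 := fun i => by
    rcases mul_eq_zero.1 (hcompl i) with h | h
    · simp [h]
    · simp [w, h]
  have hker : (fromBlocks (Matrix.of fun i j => pd (fun x' => G x' j) x i)
      (Matrix.of fun i j => pd (fun x' => F x' j) x i) 0
      (Matrix.diagonal fun i => √(s i)))ᵀ *ᵥ Sum.elim (⇑v) w = 0 := by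
    rw [fromBlocks_transpose, fromBlocks_mulVec]
    ext (j | i) <;> simp [transpose_of_pd_mulVec, mulVec_diagonal, hGv, hsw]
  have := dotProduct_mulVec_pos_of_card_le_card_pos_eigenvalues hM
    (by simp only [Fintype.card_sum, Fintype.card_fin]; exact hpos.ge) hker
    (fun h => hv (by simpa using congrArg (· ∘ Sum.inl) h))
  rw [fromBlocks_mulVec, sumElim_dotProduct_sumElim] at this
  simpa [dotProduct, mulVec_diagonal, mul_left_comm _ (lam _), hlamw] using this

theorem isLocalMinOn_feasibleSet (hf : ContDiff ℝ 2 f) (hG : ContDiff ℝ 2 G)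
    (hF : ContDiff ℝ 2 F) (hL : fderiv ℝ (LagrangianMin f G F s ν lam) x = 0)
    (hcompl : ∀ i, lam i * s i = 0) (hGeq : ∀ j, G x j = 0) (hFeq : ∀ i, F x i + s i = 0)
    (hlam : ∀ i, 0 ≤ lam i) (hs : ∀ i, 0 ≤ s i) (hstrict : ∀ i, F x i = 0 → 0 < lam i)
    (hinertia : HasInertia (HzzMin f G F x s ν lam) (n + m, l + m, 0)) :
    IsLocalMinOn f (feasibleSet G F) x := by
  set L := LagrangianMin f G F s ν lam
  set D := {y ∈ feasibleSet G F | f y < f x}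
  by_contra hmin
  obtain ⟨d, hd, hd0⟩ := exists_ne_zero_mem_posTangentConeAt (accPt_of_not_isLocalMinOn hmin)
  have hderiv : ∀ {g : EuclideanSpace ℝ (Fin n) → ℝ}, ContDiff ℝ 2 g →
      HasFDerivWithinAt g (fderiv ℝ g x) D x := fun hg =>
    (hg.differentiable two_ne_zero x).hasFDerivAt.hasFDerivWithinAt
  have hGd : ∀ j, fderiv ℝ (fun y => G y j) x d = 0 := fun j => by
    have hconst : ∀ y ∈ D, G y j = G x j := fun y hy => by rw [hy.1.1 j, hGeq j]
    exact le_antisymm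
      ((IsMaxOn.localize <| isMaxOn_iff.2 fun y hy => (hconst y hy).le).hasFDerivWithinAt_nonpos
        (hderiv (contDiff_pi.1 hG j)) hd)
      ((IsMinOn.localize <| isMinOn_iff.2 fun y hy => (hconst y hy).ge).hasFDerivWithinAt_nonneg
        (hderiv (contDiff_pi.1 hG j)) hd)
  have hFd : ∀ i, F x i = 0 → fderiv ℝ (fun y => F y i) x d ≤ 0 := fun i hi =>
    (IsMaxOn.localize <| isMaxOn_iff.2 fun y hy => hi ▸ hy.1.2 i).hasFDerivWithinAt_nonpos
      (hderiv (contDiff_pi.1 hF i)) hd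
  have hfd : fderiv ℝ f x d ≤ 0 :=
    (IsMaxOn.localize <| isMaxOn_iff.2 fun y hy => hy.2.le).hasFDerivWithinAt_nonpos (hderiv hf) hd
  have hFcrit := fun i => fderiv_apply_eq_zero_of_active (hf.differentiable two_ne_zero x)
    (hG.differentiable two_ne_zero x) (hF.differentiable two_ne_zero x) hL hcompl hFeq hlam
    hstrict hfd hGd hFd (i := i)
  have hLc : ContDiff ℝ 2 L := contDiff_lagrangianMin hf hG hF
  have hpos := dotProduct_hessian_lagrangianMin_mulVec_pos hcompl hFeq hs hinertia hd0 hGd hFcrit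
  rw [dotProduct_hessian_mulVec ((hLc.fderiv_right le_rfl).differentiable one_ne_zero x)] at hpos
  have hmaxL : IsLocalMaxOn L D x := IsMaxOn.localize <| isMaxOn_iff.2 fun y hy =>
    calc L y ≤ f y := lagrangianMin_le_of_mem_feasibleSet hcompl hlam hy.1
      _ ≤ f x := hy.2.le
      _ = L x := (lagrangianMin_apply_eq hGeq hFeq).symm
  exact (hmaxL.fderiv_fderiv_apply_nonpos hLc hL hd).not_gt hpos

end Lagrangian

theorem secondOrder_sufficient_constrained_min_general
    (f : EuclideanSpace ℝ (Fin n) → ℝ) (G : EuclideanSpace ℝ (Fin n) → Fin l → ℝ)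
    (F : EuclideanSpace ℝ (Fin n) → Fin m → ℝ)
    (hf : ContDiff ℝ 2 f) (hG : ContDiff ℝ 2 G) (hF : ContDiff ℝ 2 F)
    (x : EuclideanSpace ℝ (Fin n)) (s : Fin m → ℝ) (ν : Fin l → ℝ) (lam : Fin m → ℝ)
    -- g(z,0) = 0 :
    (hgrad : gradient (LagrangianMin f G F s ν lam) x = 0)
    (hcompl : ∀ i, lam i * s i = 0)
    (hGeq : ∀ j, G x j = 0)
    (hFeq : ∀ i, F x i + s i = 0)
    (hlam : ∀ i, 0 ≤ lam i) (hs : ∀ i, 0 ≤ s i)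
    -- strict complementarity :
    (hstrict : ∀ i, F x i = 0 → 0 < lam i)
    -- inertia condition :
    (hinertia : HasInertia (HzzMin f G F x s ν lam) (n + m, l + m, 0)) :
    ∃ δ > 0, ∀ x' : EuclideanSpace ℝ (Fin n),
      (∀ j, G x' j = 0) → (∀ i, F x' i ≤ 0) → ‖x' - x‖ < δ → f x ≤ f x' := by
  have hL : fderiv ℝ (LagrangianMin f G F s ν lam) x = 0 := by
    simpa [gradient] using congrArg (InnerProductSpace.toDual ℝ _) hgrad
  obtain ⟨δ, hδ, hmin⟩ := Metric.eventually_nhds_iff.1 <| eventually_nhdsWithin_iff.1 <|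
    isLocalMinOn_feasibleSet hf hG hF hL hcompl hGeq hFeq hlam hs hstrict hinertia
  exact ⟨δ, hδ, fun x' hG' hF' hx' => hmin (by rwa [dist_eq_norm]) ⟨hG', hF'⟩⟩

/-- **Second order sufficient conditions for constrained minimization**:
if `g(z,0) = 0` with `λ, s ≥ 0`, the LICQ and strict complementarity hold at `z`, and
`inertia(H_zz f(z)) = (n+m, l+m, 0)`, then `x` is a local minimum of the constrained problem. -/
theorem secondOrder_sufficient_constrained_min
    (f : EuclideanSpace ℝ (Fin n) → ℝ) (G : EuclideanSpace ℝ (Fin n) → Fin l → ℝ)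
    (F : EuclideanSpace ℝ (Fin n) → Fin m → ℝ)
    (hf : ContDiff ℝ 2 f) (hG : ContDiff ℝ 2 G) (hF : ContDiff ℝ 2 F)
    (x : EuclideanSpace ℝ (Fin n)) (s : Fin m → ℝ) (ν : Fin l → ℝ) (lam : Fin m → ℝ)
    -- g(z,0) = 0 :
    (hgrad : gradient (LagrangianMin f G F s ν lam) x = 0)
    (hcompl : ∀ i, lam i * s i = 0)
    (hGeq : ∀ j, G x j = 0)
    (hFeq : ∀ i, F x i + s i = 0)
    (hlam : ∀ i, 0 ≤ lam i) (hs : ∀ i, 0 ≤ s i)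
    -- LICQ :
    (hLICQ : LinearIndependent ℝ
      (Sum.elim (fun j : Fin l => gradient (fun x' => G x' j) x)
        (fun i : {i : Fin m // F x i = 0} => gradient (fun x' => F x' i.1) x)))
    -- strict complementarity :
    (hstrict : ∀ i, F x i = 0 → 0 < lam i)
    -- inertia condition :
    (hinertia : HasInertia (HzzMin f G F x s ν lam) (n + m, l + m, 0)) :
    ∃ δ > 0, ∀ x' : EuclideanSpace ℝ (Fin n),
      (∀ j, G x' j = 0) → (∀ i, F x' i ≤ 0) → ‖x' - x‖ < δ → f x ≤ f x' :=
  secondOrder_sufficient_constrained_min_general f G F hf hG hF x s ν lam hgrad hcompl hGeq hFeq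
    hlam hs hstrict hinertia
end
end

section
/- Let H = [[C, B], [B', A]] be a real symmetric (n_x + n_y) × (n_x + n_y) matrix with A (n_y × n_y) negative definite and the Schur complement C − B A⁻¹ B' positive definite. Let ε_y ≥ 0 and ε_x ≥ 0 satisfy ε_x·I ⪰ ε_y · B A⁻² B' in the Loewner order. Then for every μ ∈ [0, 2] the matrix H + μ·diag(ε_x·I_{n_x}, −ε_y·I_{n_y}) is invertible; moreover, for every μ ∈ [0, 2], A − μ·ε_y·I is negative definite and C − B (A − μ·ε_y·I)⁻¹ B' + μ·ε_x·I is positive definite. -/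
/-!
With `c = μ ε_y ≥ 0`, the matrix `A - c I` stays negative definite, and its inverse `R` has the
second-order resolvent expansion `R = A⁻¹ + c A⁻² + c² A⁻¹ R A⁻¹`. Hence the shifted Schur complement
splits as `(C - B A⁻¹ B') + μ (ε_x I - ε_y B A⁻² B') + c² (B A⁻¹) (-R) (B A⁻¹)'`, a positive
definite matrix plus two positive semidefinite ones. Invertibility of the modified Hessian then
follows from the block-determinant formula with respect to the invertible block `A - c I`.
-/

open Matrix

noncomputable section

/-- A real matrix is negative definite if it is symmetric and `v'Av < 0` for all `v ≠ 0`. -/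
def MatNegDef {ι : Type*} [Fintype ι] (A : Matrix ι ι ℝ) : Prop :=
  A.IsHermitian ∧ ∀ v : ι → ℝ, v ≠ 0 → v ⬝ᵥ A.mulVec v < 0

namespace Matrix

theorem inv_sub_smul_one_eq {n α : Type*} [Fintype n] [DecidableEq n] [CommRing α]
    {A : Matrix n n α} (c : α) (hA : IsUnit A) (hAc : IsUnit (A - c • 1)) :
    (A - c • 1)⁻¹ = A⁻¹ + c • (A⁻¹ * A⁻¹) + (c * c) • (A⁻¹ * (A - c • 1)⁻¹ * A⁻¹) := by
  have hleft : (A - c • 1)⁻¹ = A⁻¹ + c • (A⁻¹ * (A - c • 1)⁻¹) := by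
    have := inv_sub_inv (iff_of_true hA hAc)
    rw [sub_sub_cancel_left, Matrix.mul_neg, Matrix.neg_mul, Matrix.mul_smul,
      Matrix.mul_one, Matrix.smul_mul] at this
    rw [← sub_eq_iff_eq_add', ← neg_sub, this, neg_neg]
  have hright : (A - c • 1)⁻¹ = A⁻¹ + c • ((A - c • 1)⁻¹ * A⁻¹) := by
    have := inv_sub_inv (iff_of_true hAc hA)
    rw [sub_sub_cancel, Matrix.mul_smul, Matrix.mul_one, Matrix.smul_mul] at this
    rw [← sub_eq_iff_eq_add', this]
  conv_lhs => rw [hleft, hright]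
  simp only [Matrix.mul_add, Matrix.mul_smul, smul_add, smul_smul, Matrix.mul_assoc, add_assoc]

theorem isUnit_det_fromBlocks_of_isUnit_det_schur {m n α : Type*} [Fintype m] [Fintype n]
    [DecidableEq m] [DecidableEq n] [CommRing α] {A : Matrix m m α} {B : Matrix m n α}
    {C : Matrix n m α} {D : Matrix n n α} (hD : IsUnit D.det)
    (hS : IsUnit (A - B * D⁻¹ * C).det) : IsUnit (fromBlocks A B C D).det := by
  let := D.invertibleOfIsUnitDet hD
  rw [← isUnit_iff_isUnit_det, isUnit_fromBlocks_iff_of_invertible₂₂, invOf_eq_nonsing_inv,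
    isUnit_iff_isUnit_det]
  exact hS

end Matrix

section NegDef

variable {ι : Type*} [Fintype ι] {A : Matrix ι ι ℝ}

theorem matNegDef_iff_posDef_neg : MatNegDef A ↔ (-A).PosDef := by
  simp only [MatNegDef, posDef_iff_dotProduct_mulVec, isHermitian_neg_iff, star_trivial,
    neg_mulVec, dotProduct_neg, neg_pos]

variable [DecidableEq ι]

theorem MatNegDef.sub_smul_one (hA : MatNegDef A) {c : ℝ} (hc : 0 ≤ c) :
    MatNegDef (A - c • 1) := by
  rw [matNegDef_iff_posDef_neg, neg_sub', sub_neg_eq_add]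
  exact (matNegDef_iff_posDef_neg.mp hA).add_posSemidef (PosSemidef.one.smul hc)

theorem MatNegDef.isUnit_det (hA : MatNegDef A) : IsUnit A.det :=
  (isUnit_iff_isUnit_det A).mp ((IsUnit.neg_iff A).mp (matNegDef_iff_posDef_neg.mp hA).isUnit)

theorem MatNegDef.posDef_neg_inv (hA : MatNegDef A) : (-A⁻¹).PosDef := by
  have hinv : (-A)⁻¹ = -A⁻¹ :=
    inv_eq_right_inv (by rw [neg_mul_neg, mul_nonsing_inv A hA.isUnit_det])
  rw [← hinv]
  exact (matNegDef_iff_posDef_neg.mp hA).inv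

end NegDef

theorem Matrix.fromBlocks_add_smul_diagonal_sum_elim {m n α : Type*} [DecidableEq m]
    [DecidableEq n] [CommRing α] (A : Matrix m m α) (B : Matrix m n α) (C : Matrix n m α)
    (D : Matrix n n α) (μ a d : α) :
    fromBlocks A B C D + μ • diagonal (Sum.elim (fun _ : m => a) (fun _ : n => d)) =
      fromBlocks (A + (μ * a) • 1) B C (D + (μ * d) • 1) := by
  rw [← fromBlocks_diagonal, fromBlocks_smul, fromBlocks_add, ← smul_one_eq_diagonal,
    ← smul_one_eq_diagonal]
  simp only [smul_smul, smul_zero, add_zero]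

theorem posDef_shifted_schur_complement {m n : Type*} [Fintype m] [Fintype n] [DecidableEq m]
    [DecidableEq n] {A : Matrix n n ℝ} {B : Matrix m n ℝ} {C : Matrix m m ℝ}
    (hA : MatNegDef A) (hSchur : (C - B * A⁻¹ * Bᵀ).PosDef) {εx εy μ : ℝ} (hεy : 0 ≤ εy)
    (hμ : 0 ≤ μ) (hLoewner : (εx • (1 : Matrix m m ℝ) - εy • (B * A⁻¹ * A⁻¹ * Bᵀ)).PosSemidef) :
    (C - B * (A - (μ * εy) • 1)⁻¹ * Bᵀ + (μ * εx) • 1).PosDef := by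
  set c := μ * εy
  have hAc : MatNegDef (A - c • 1) := hA.sub_smul_one (mul_nonneg hμ hεy)
  have hsplit : C - B * (A - c • 1)⁻¹ * Bᵀ + (μ * εx) • 1 =
      (C - B * A⁻¹ * Bᵀ) + (μ • (εx • 1 - εy • (B * A⁻¹ * A⁻¹ * Bᵀ)) +
        (c * c) • (B * A⁻¹ * -(A - c • 1)⁻¹ * (B * A⁻¹)ᴴ)) := by
    conv_lhs => rw [inv_sub_smul_one_eq c (isUnit_iff_isUnit_det _ |>.mpr hA.isUnit_det)
      (isUnit_iff_isUnit_det _ |>.mpr hAc.isUnit_det)]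
    rw [conjTranspose_mul, hA.1.inv.eq, conjTranspose_eq_transpose_of_trivial]
    simp only [Matrix.mul_add, Matrix.add_mul, Matrix.mul_smul, Matrix.smul_mul, Matrix.mul_neg,
      Matrix.neg_mul, smul_sub, smul_smul, Matrix.mul_assoc, c]
    module
  rw [hsplit]
  exact hSchur.add_posSemidef <| (hLoewner.smul hμ).add <|
    (hAc.posDef_neg_inv.posSemidef.mul_mul_conjTranspose_same _).smul (mul_self_nonneg c)

theorem modified_hessian_nonsingular_on_homotopy_general {nx ny : ℕ}
    (C : Matrix (Fin nx) (Fin nx) ℝ) (B : Matrix (Fin nx) (Fin ny) ℝ)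
    (A : Matrix (Fin ny) (Fin ny) ℝ)
    (hA : MatNegDef A)
    (hSchur : (C - B * A⁻¹ * Bᵀ).PosDef)
    (εx εy : ℝ) (hεy : 0 ≤ εy)
    (hLoewner : (εx • (1 : Matrix (Fin nx) (Fin nx) ℝ) -
        εy • (B * A⁻¹ * A⁻¹ * Bᵀ)).PosSemidef) :
    ∀ μ ∈ Set.Icc (0 : ℝ) 2,
      IsUnit (Matrix.fromBlocks C B Bᵀ A +
          μ • Matrix.diagonal (Sum.elim (fun _ : Fin nx => εx) (fun _ : Fin ny => -εy))).det ∧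
      MatNegDef (A - (μ * εy) • (1 : Matrix (Fin ny) (Fin ny) ℝ)) ∧
      (C - B * (A - (μ * εy) • (1 : Matrix (Fin ny) (Fin ny) ℝ))⁻¹ * Bᵀ +
          (μ * εx) • (1 : Matrix (Fin nx) (Fin nx) ℝ)).PosDef := by
  rintro μ ⟨hμ, -⟩
  have hAμ := hA.sub_smul_one (mul_nonneg hμ hεy)
  have hS := posDef_shifted_schur_complement hA hSchur hεy hμ hLoewner
  refine ⟨?_, hAμ, hS⟩
  rw [fromBlocks_add_smul_diagonal_sum_elim, mul_neg, neg_smul, ← sub_eq_add_neg]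
  refine isUnit_det_fromBlocks_of_isUnit_det_schur hAμ.isUnit_det ?_
  rw [add_sub_right_comm]
  exact hS.det_pos.ne'.isUnit

/-- **Nonsingularity of the modified minmax Hessian along the homotopy**: if `A ≺ 0`,
`C − B A⁻¹ B' ≻ 0` and `ε_x·I ⪰ ε_y·B A⁻² B'`, then for every `μ ∈ [0,2]` the matrix
`H + μ·diag(ε_x·I, −ε_y·I)` is invertible, `A − μ·ε_y·I ≺ 0`, and
`C − B(A − μ·ε_y·I)⁻¹B' + μ·ε_x·I ≻ 0`. -/
theorem modified_hessian_nonsingular_on_homotopy {nx ny : ℕ}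
    (C : Matrix (Fin nx) (Fin nx) ℝ) (B : Matrix (Fin nx) (Fin ny) ℝ)
    (A : Matrix (Fin ny) (Fin ny) ℝ)
    (hC : C.IsHermitian) (hA : MatNegDef A)
    (hSchur : (C - B * A⁻¹ * Bᵀ).PosDef)
    (εx εy : ℝ) (hεx : 0 ≤ εx) (hεy : 0 ≤ εy)
    (hLoewner : (εx • (1 : Matrix (Fin nx) (Fin nx) ℝ) -
        εy • (B * A⁻¹ * A⁻¹ * Bᵀ)).PosSemidef) :
    ∀ μ ∈ Set.Icc (0 : ℝ) 2,
      IsUnit (Matrix.fromBlocks C B Bᵀ A +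
          μ • Matrix.diagonal (Sum.elim (fun _ : Fin nx => εx) (fun _ : Fin ny => -εy))).det ∧
      MatNegDef (A - (μ * εy) • (1 : Matrix (Fin ny) (Fin ny) ℝ)) ∧
      (C - B * (A - (μ * εy) • (1 : Matrix (Fin ny) (Fin ny) ℝ))⁻¹ * Bᵀ +
          (μ * εx) • (1 : Matrix (Fin nx) (Fin nx) ℝ)).PosDef :=
  modified_hessian_nonsingular_on_homotopy_general C B A hA hSchur εx εy hεy hLoewner
end
end
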